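/- For every integer n ≥ 2, the 2-token graph F_2(K_{1,n}) of the star graph K_{1,n} is isomorphic to the barycentric subdivision S(K_n) of the complete graph K_n, via the map sending the original vertex i of K_n to the 2-subset {0, i} and sending the subdivision vertex of the edge {i, j} to the 2-subset {i, j}. Here S(K_n) is the simple graph whose vertex set is the disjoint union of {1, …, n} and the set of 2-element subsets of {1, …, n}, where a vertex i is adjacent to a 2-subset {a, b} if and only if i ∈ {a, b}, and there are no other adjacencies. -/

import Mathlib

open SimpleGraph Finset

variable {V : Type*}

/-- The `k`-token graph of a simple graph `X`: vertices are the `k`-element subsets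
of the vertex set, two subsets being adjacent when their symmetric difference is an
edge of `X`. -/
def tokenGraph [DecidableEq V] (X : SimpleGraph V) (k : ℕ) :
    SimpleGraph {A : Finset V // A.card = k} where
  Adj A B := ∃ a b : V, X.Adj a b ∧ (symmDiff A.val B.val) = {a, b}
  symm := by
    constructor
    rintro A B ⟨a, b, hab, h⟩
    exact ⟨b, a, hab.symm, by rw [symmDiff_comm]; rw [h]; exact Finset.pair_comm a b⟩
  loopless := by
    constructor
    rintro A ⟨a, b, hab, h⟩
    simp only [symmDiff_self, Finset.bot_eq_empty] at h
    exact (Finset.insert_ne_empty a {b}) h.symm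

/-- A simple graph is edge-transitive if its automorphism group acts transitively
on its edges. -/
def EdgeTransitive {W : Type*} (Y : SimpleGraph W) : Prop :=
  ∀ e ∈ Y.edgeSet, ∀ f ∈ Y.edgeSet, ∃ φ : Y ≃g Y, e.map φ = f

/-- A simple graph is vertex-transitive if its automorphism group acts transitively
on its vertices. -/
def VertexTransitive {W : Type*} (Y : SimpleGraph W) : Prop :=
  ∀ u v : W, ∃ φ : Y ≃g Y, φ u = v

/-- The star graph `K_{1,n}` on vertex set `{0, 1, …, n}`, where the center `0`
is joined to each of the `n` leaves. -/
def starGraph (n : ℕ) : SimpleGraph (Fin (n + 1)) where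
  Adj i j := i ≠ j ∧ (i = 0 ∨ j = 0)
  symm := by constructor; rintro i j ⟨hne, h⟩; exact ⟨hne.symm, h.symm⟩
  loopless := by constructor; rintro i ⟨hne, _⟩; exact hne rfl

/-- The barycentric subdivision `S(K_n)` of the complete graph `K_n`: its vertices are
the vertices of `K_n` together with the `2`-subsets of vertices (one subdivision vertex
per edge), and a vertex `i` is adjacent to a `2`-subset `A` iff `i ∈ A`. -/
def subdivisionComplete (n : ℕ) :
    SimpleGraph (Fin n ⊕ {A : Finset (Fin n) // A.card = 2}) where
  Adj v w :=
    (∃ (i : Fin n) (A : {A : Finset (Fin n) // A.card = 2}),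
      v = Sum.inl i ∧ w = Sum.inr A ∧ i ∈ A.val) ∨
    (∃ (i : Fin n) (A : {A : Finset (Fin n) // A.card = 2}),
      v = Sum.inr A ∧ w = Sum.inl i ∧ i ∈ A.val)
  symm := by
    constructor
    rintro v w (⟨i, A, h1, h2, h3⟩ | ⟨i, A, h1, h2, h3⟩)
    · exact Or.inr ⟨i, A, h2, h1, h3⟩
    · exact Or.inl ⟨i, A, h2, h1, h3⟩
  loopless := by
    constructor
    rintro v (⟨i, A, h1, h2, _⟩ | ⟨i, A, h1, h2, _⟩) <;> rw [h1] at h2 <;> exact absurd h2 (by simp)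

/-!
Every edge of `K_{1,n}` contains the centre `0`, so two `2`-subsets are adjacent in
`F_2(K_{1,n})` iff exactly one of them contains `0` and their symmetric difference has two
elements. For `{0, i + 1}` and `A + 1` that symmetric difference is `{0} ∪ (({i} ∆ A) + 1)`,
which has two elements exactly when `i ∈ A`.
-/

open scoped symmDiff

namespace Finset

variable {α : Type*} [DecidableEq α]

theorem insert_symmDiff_of_notMem {a : α} {s t : Finset α} (hs : a ∉ s) (ht : a ∉ t) :
    insert a s ∆ t = insert a (s ∆ t) := by
  ext x
  by_cases hx : x = a
  · subst hx
    simp [mem_symmDiff, hs, ht]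
  · simp [mem_symmDiff, hx]

theorem card_singleton_symmDiff (a : α) (s : Finset α) :
    ({a} ∆ s).card = if a ∈ s then s.card - 1 else s.card + 1 := by
  split_ifs with h
  · rw [Finset.symmDiff_def, sdiff_eq_empty_iff_subset.2 (singleton_subset_iff.2 h), empty_union,
      sdiff_singleton_eq_erase, card_erase_of_mem h]
  · rw [symmDiff_eq_union (disjoint_singleton_left.2 h), ← insert_eq, card_insert_of_notMem h]

end Finset

theorem tokenGraph_starGraph_adj_iff {n k : ℕ} {B C : {A : Finset (Fin (n + 1)) // A.card = k}} :
    (tokenGraph (_root_.starGraph n) k).Adj B C ↔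
      0 ∈ B.1 ∆ C.1 ∧ (B.1 ∆ C.1).card = 2 := by
  constructor
  · rintro ⟨a, b, ⟨hab, h0⟩, h⟩
    rw [h, card_pair hab]
    rcases h0 with rfl | rfl <;> simp
  · rintro ⟨h0, h2⟩
    obtain ⟨a, b, hab, h⟩ := card_eq_two.1 h2
    rw [h, mem_insert, mem_singleton] at h0
    rcases h0 with rfl | rfl
    · exact ⟨0, b, ⟨hab, .inl rfl⟩, h⟩
    · exact ⟨a, 0, ⟨hab, .inr rfl⟩, h⟩

namespace subdivisionComplete

variable {n : ℕ}

theorem adj_inl_inr_iff {i : Fin n} {A : {A : Finset (Fin n) // A.card = 2}} :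
    (subdivisionComplete n).Adj (.inl i) (.inr A) ↔ i ∈ A.1 := by
  constructor
  · rintro (⟨j, B, hj, hB, h⟩ | ⟨_, _, h, _, _⟩)
    · cases hj; cases hB; exact h
    · cases h
  · exact fun h => .inl ⟨i, A, rfl, rfl, h⟩

theorem not_adj_inl_inl (i j : Fin n) : ¬(subdivisionComplete n).Adj (.inl i) (.inl j) := by
  simp [subdivisionComplete]

theorem not_adj_inr_inr (A B : {A : Finset (Fin n) // A.card = 2}) :
    ¬(subdivisionComplete n).Adj (.inr A) (.inr B) := by
  simp [subdivisionComplete]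

def toTwoSubset :
    Fin n ⊕ {A : Finset (Fin n) // A.card = 2} → {B : Finset (Fin (n + 1)) // B.card = 2}
  | .inl i => ⟨{0, i.succ}, card_pair (Fin.succ_ne_zero i).symm⟩
  | .inr A => ⟨A.1.image Fin.succ, by rw [card_image_of_injective _ (Fin.succ_injective n), A.2]⟩

theorem zero_mem_toTwoSubset_iff (v : Fin n ⊕ {A : Finset (Fin n) // A.card = 2}) :
    0 ∈ (toTwoSubset v).1 ↔ v.isLeft := by
  rcases v with i | A <;> simp [toTwoSubset, Fin.succ_ne_zero]

theorem toTwoSubset_injective : Function.Injective (toTwoSubset (n := n)) := by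
  have isLeft_eq {v w} (h : toTwoSubset (n := n) v = toTwoSubset w) : v.isLeft = w.isLeft := by
    rw [Bool.eq_iff_iff, ← zero_mem_toTwoSubset_iff, ← zero_mem_toTwoSubset_iff, h]
  rintro (i | A) (j | B) h
  · have h0 (k : Fin n) : (0 : Fin (n + 1)) ∉ ({k.succ} : Finset _) := by
      simp [(Fin.succ_ne_zero k).symm]
    have h := congrArg (fun B => B.1.erase 0) h
    simp only [toTwoSubset, erase_insert (h0 _), singleton_inj, Fin.succ_inj] at h
    rw [h]
  · simpa using isLeft_eq h
  · simpa using isLeft_eq h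
  · simp only [toTwoSubset, Subtype.mk.injEq] at h
    exact congrArg Sum.inr (Subtype.ext (image_injective (Fin.succ_injective n) h))

theorem toTwoSubset_surjective : Function.Surjective (toTwoSubset (n := n)) := by
  rintro ⟨B, hB⟩
  obtain ⟨a, b, hab, rfl⟩ := card_eq_two.1 hB
  rcases Fin.eq_zero_or_eq_succ a with rfl | ⟨i, rfl⟩ <;>
    rcases Fin.eq_zero_or_eq_succ b with rfl | ⟨j, rfl⟩
  · exact absurd rfl hab
  · exact ⟨.inl j, rfl⟩
  · exact ⟨.inl i, Subtype.ext (pair_comm _ _)⟩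
  · refine ⟨.inr ⟨{i, j}, card_pair fun h => hab (h ▸ rfl)⟩, Subtype.ext ?_⟩
    simp [toTwoSubset]

theorem toTwoSubset_adj_inl_inr_iff {i : Fin n} {A : {A : Finset (Fin n) // A.card = 2}} :
    (tokenGraph (_root_.starGraph n) 2).Adj (toTwoSubset (.inl i)) (toTwoSubset (.inr A)) ↔
      i ∈ A.1 := by
  have h0 : (0 : Fin (n + 1)) ∉ A.1.image Fin.succ := by simp [Fin.succ_ne_zero]
  have hdiff : ({0, i.succ} : Finset (Fin (n + 1))) ∆ A.1.image Fin.succ =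
      insert 0 (({i} ∆ A.1).image Fin.succ) := by
    rw [image_symmDiff _ _ (Fin.succ_injective n), image_singleton,
      insert_symmDiff_of_notMem (by simp [(Fin.succ_ne_zero i).symm]) h0]
  have hcard := card_singleton_symmDiff i A.1
  simp only [tokenGraph_starGraph_adj_iff, toTwoSubset, hdiff, mem_insert_self, true_and]
  rw [card_insert_of_notMem (by simp [Fin.succ_ne_zero]),
    card_image_of_injective _ (Fin.succ_injective n), hcard, A.2]
  split_ifs <;> simpa

theorem toTwoSubset_adj_iff {v w : Fin n ⊕ {A : Finset (Fin n) // A.card = 2}} :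
    (tokenGraph (_root_.starGraph n) 2).Adj (toTwoSubset v) (toTwoSubset w) ↔
      (subdivisionComplete n).Adj v w := by
  have same_side_not_adj {v w} (h : v.isLeft = w.isLeft) :
      ¬(tokenGraph (_root_.starGraph n) 2).Adj (toTwoSubset v) (toTwoSubset w) := by
    rw [tokenGraph_starGraph_adj_iff, mem_symmDiff, zero_mem_toTwoSubset_iff,
      zero_mem_toTwoSubset_iff, h]
    tauto
  rcases v with i | A <;> rcases w with j | B
  · exact iff_of_false (same_side_not_adj rfl) (not_adj_inl_inl i j)
  · rw [toTwoSubset_adj_inl_inr_iff, adj_inl_inr_iff]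
  · rw [adj_comm, (subdivisionComplete n).adj_comm, toTwoSubset_adj_inl_inr_iff, adj_inl_inr_iff]
  · exact iff_of_false (same_side_not_adj rfl) (not_adj_inr_inr A B)

end subdivisionComplete

theorem tokenGraph_star_two_iso_subdivision_general (n : ℕ) :
    ∃ φ : subdivisionComplete n ≃g tokenGraph (_root_.starGraph n) 2,
      (∀ i : Fin n, ((φ (Sum.inl i) : Finset (Fin (n + 1)))) = {0, i.succ}) ∧
      (∀ A : {A : Finset (Fin n) // A.card = 2},
        ((φ (Sum.inr A) : Finset (Fin (n + 1)))) = A.val.image Fin.succ) :=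
  ⟨⟨.ofBijective _ ⟨subdivisionComplete.toTwoSubset_injective,
      subdivisionComplete.toTwoSubset_surjective⟩, subdivisionComplete.toTwoSubset_adj_iff⟩,
    fun _ => rfl, fun _ => rfl⟩

/-- The `2`-token graph of the star `K_{1,n}` is isomorphic to the barycentric
subdivision of `K_n`, via `i ↦ {0, i}` on original vertices (here the vertex `i` of
`K_n` corresponds to the leaf `i.succ` of the star) and `{i, j} ↦ {i, j}` on
subdivision vertices. -/
theorem tokenGraph_star_two_iso_subdivision (n : ℕ) (hn : 2 ≤ n) :
    ∃ φ : subdivisionComplete n ≃g tokenGraph (_root_.starGraph n) 2,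
      (∀ i : Fin n, ((φ (Sum.inl i) : Finset (Fin (n + 1)))) = {0, i.succ}) ∧
      (∀ A : {A : Finset (Fin n) // A.card = 2},
        ((φ (Sum.inr A) : Finset (Fin (n + 1)))) = A.val.image Fin.succ) :=
  tokenGraph_star_two_iso_subdivision_general n
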